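/- Let Q be a finite injective quandle, i.e. φ_Q : Q → G(Q) is injective. Then there exist a finite group G and an injective quandle morphism from Q to Conj(G); that is, Q is a subquandle (for conjugation) of a finite group. -/

import Mathlib

/-!
The enveloping group `G(Q)` acts on `Q` through `g φ(x) g⁻¹ = φ(g • x)`, so the kernel of the
action is central. For finite `Q` the centre of `G(Q)` therefore has finite index; it is finitely
generated because `G(Q)` is generated by the finite set `φ(Q)`. Finitely generated abelian groups
are residually finite (structure theorem), and a group with a residually finite subgroup of finite
index is residually finite. Hence the finitely many points of `φ(Q)` stay distinct in some finite
quotient of `G(Q)`, and `Q` embeds into its conjugation quandle.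
-/

open Quandles

namespace Group.ResiduallyFinite

variable {G G' : Type*} [Group G] [Group G']

@[to_additive]
theorem of_injective [ResiduallyFinite G'] {f : G →* G'} (hf : Function.Injective f) :
    ResiduallyFinite G := by
  refine residuallyFinite_iff_exists_finiteIndexNormalSubgroup.mpr fun g hg => ?_
  obtain ⟨H, hH⟩ := exists_finiteIndexNormalSubgroup_notMem (f g) ((map_ne_one_iff f hf).mpr hg)
  exact ⟨H.comap f, hH⟩

@[to_additive]
instance pi {ι : Type*} {G : ι → Type*} [∀ i, Group (G i)] [∀ i, ResiduallyFinite (G i)] :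
    ResiduallyFinite (∀ i, G i) := by
  refine residuallyFinite_iff_exists_finiteIndexNormalSubgroup.mpr fun g hg => ?_
  obtain ⟨i, hi⟩ := Function.ne_iff.mp hg
  obtain ⟨H, hH⟩ := exists_finiteIndexNormalSubgroup_notMem (g i) hi
  exact ⟨H.comap (Pi.evalMonoidHom G i), hH⟩

@[to_additive]
theorem of_finiteIndex (H : Subgroup G) [H.FiniteIndex] [ResiduallyFinite H] :
    ResiduallyFinite G := by
  refine residuallyFinite_iff_exists_finiteIndex.mpr fun g hg => ?_
  by_cases hgH : g ∈ H
  · obtain ⟨K, hK, hgK⟩ := residuallyFinite_iff_exists_finiteIndex.mp ‹ResiduallyFinite H›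
      ⟨g, hgH⟩ (by simpa using hg)
    refine ⟨K.map H.subtype, ⟨?_⟩, ?_⟩
    · rw [Subgroup.index_map_subtype]
      exact mul_ne_zero hK.index_ne_zero Subgroup.FiniteIndex.index_ne_zero
    · rintro ⟨k, hk, hkg⟩
      exact hgK (by rwa [show k = ⟨g, hgH⟩ from Subtype.ext hkg] at hk)
  · exact ⟨H, inferInstance, hgH⟩

@[to_additive]
theorem exists_finiteIndexNormalSubgroup_injOn [ResiduallyFinite G] {s : Set G}
    (hs : s.Finite) :
    ∃ N : FiniteIndexNormalSubgroup G, Set.InjOn ((↑) : G → G ⧸ N.toSubgroup) s := by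
  let ι := {p : G × G // p ∈ s ×ˢ s ∧ p.1 ≠ p.2}
  have : Finite ι := ((hs.prod hs).subset fun _ hp => hp.1).to_subtype
  choose H hH using fun p : ι => exists_finiteIndexNormalSubgroup_of_residuallyFinite _ _ p.2.2
  let K : Subgroup G := ⨅ p, (H p).toSubgroup
  have : K.Normal := Subgroup.normal_iInf_normal fun p => inferInstance
  have : K.FiniteIndex := Subgroup.finiteIndex_iInf fun p => inferInstance
  refine ⟨.ofSubgroup K, fun x hx y hy hxy => by_contra fun hne => ?_⟩
  have hmem : x⁻¹ * y ∈ K := QuotientGroup.eq.mp hxy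
  exact hH ⟨(x, y), ⟨hx, hy⟩, hne⟩ (QuotientGroup.eq.mpr (Subgroup.mem_iInf.mp hmem _))

end Group.ResiduallyFinite

instance Int.residuallyFinite : AddGroup.ResiduallyFinite ℤ := by
  refine AddGroup.residuallyFinite_of_forall_exists_finite_addMonoidHom fun k hk => ?_
  refine ⟨ZMod (k.natAbs + 1), inferInstance, inferInstance, Int.castAddHom _, fun hk0 => hk ?_⟩
  have hdvd : ((k.natAbs + 1 : ℕ) : ℤ) ∣ k :=
    (ZMod.intCast_zmod_eq_zero_iff_dvd _ _).mp (by simpa using hk0)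
  exact Int.eq_zero_of_abs_lt_dvd hdvd (by rw [Int.abs_eq_natAbs]; omega)

instance Finsupp.residuallyFinite {ι M : Type*} [AddGroup M] [AddGroup.ResiduallyFinite M] :
    AddGroup.ResiduallyFinite (ι →₀ M) :=
  .of_injective (f := Finsupp.coeFnAddHom) DFunLike.coe_injective

theorem AddCommGroup.residuallyFinite_of_fg (A : Type*) [AddCommGroup A] [AddGroup.FG A] :
    AddGroup.ResiduallyFinite A := by
  obtain ⟨n, ι, _, p, hp, e, ⟨f⟩⟩ := AddCommGroup.equiv_free_prod_directSum_zmod A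
  have : ∀ i, NeZero (p i ^ e i) := fun i => ⟨pow_ne_zero _ (hp i).ne_zero⟩
  have : Finite (DirectSum ι fun i => ZMod (p i ^ e i)) :=
    .of_equiv _ DFinsupp.equivFunOnFintype.symm
  exact .of_injective (f := f.toAddMonoidHom) f.injective

theorem CommGroup.residuallyFinite_of_fg (A : Type*) [CommGroup A] [Group.FG A] :
    Group.ResiduallyFinite A := by
  have := AddCommGroup.residuallyFinite_of_fg (Additive A)
  refine Group.residuallyFinite_of_forall_exists_finite_monoidHom fun a ha => ?_
  obtain ⟨H, hH⟩ := AddGroup.exists_finiteIndexNormalAddSubgroup_notMem (Additive.ofMul a) ha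
  refine ⟨Multiplicative (Additive A ⧸ H.toAddSubgroup), inferInstance, inferInstance,
    AddMonoidHom.toMultiplicativeRight (QuotientAddGroup.mk' _), ?_⟩
  exact fun h => hH ((QuotientAddGroup.eq_zero_iff _).mp h)

namespace Rack

variable {R : Type*} [Rack R]

theorem toEnvelGroup_act (x y : R) :
    toEnvelGroup R (x ◃ y) = toEnvelGroup R x * toEnvelGroup R y * (toEnvelGroup R x)⁻¹ :=
  (toEnvelGroup R).map_act

variable (R) in
theorem closure_range_toEnvelGroup :
    Subgroup.closure (Set.range (toEnvelGroup R)) = ⊤ := by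
  refine eq_top_iff.mpr fun g _ => Quotient.inductionOn g fun a => ?_
  induction a with
  | unit => exact Subgroup.one_mem _
  | incl x => exact Subgroup.subset_closure ⟨x, rfl⟩
  | mul a b iha ihb => exact Subgroup.mul_mem _ iha ihb
  | inv a iha => exact Subgroup.inv_mem _ iha

theorem conj_toEnvelGroup (g : EnvelGroup R) (x : R) :
    g * toEnvelGroup R x * g⁻¹ = toEnvelGroup R (envelAction g x) := by
  have hg : g ∈ Subgroup.closure (Set.range (toEnvelGroup R)) := by
    simp [closure_range_toEnvelGroup]
  induction hg using Subgroup.closure_induction generalizing x with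
  | mem _ hg =>
    obtain ⟨y, rfl⟩ := hg
    rw [envelAction_prop, toEnvelGroup_act]
  | one => simp
  | mul g h _ _ ihg ihh =>
    rw [map_mul, Equiv.Perm.mul_apply, ← ihg, ← ihh]
    group
  | inv g _ ih =>
    have h := ih (envelAction g⁻¹ x)
    rw [map_inv, ← Equiv.Perm.mul_apply, mul_inv_cancel, Equiv.Perm.one_apply] at h
    rw [map_inv, ← h]
    group

theorem ker_envelAction_le_center : envelAction.ker ≤ Subgroup.center (EnvelGroup R) := by
  intro k hk
  rw [← Subgroup.centralizer_univ, ← Subgroup.coe_top, ← closure_range_toEnvelGroup,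
    Subgroup.centralizer_closure]
  rintro _ ⟨x, rfl⟩
  have h := conj_toEnvelGroup k x
  rw [MonoidHom.mem_ker.mp hk, Equiv.Perm.one_apply] at h
  exact eq_mul_inv_iff_mul_eq.mp h.symm

variable [Finite R]

instance : (Subgroup.center (EnvelGroup R)).FiniteIndex :=
  Subgroup.finiteIndex_of_le ker_envelAction_le_center

instance : Group.FG (EnvelGroup R) :=
  Group.fg_iff.mpr ⟨_, closure_range_toEnvelGroup R, Set.finite_range _⟩

instance : Group.ResiduallyFinite (EnvelGroup R) :=
  open scoped IsMulCommutative in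
  have := CommGroup.residuallyFinite_of_fg (Subgroup.center (EnvelGroup R))
  .of_finiteIndex (Subgroup.center (EnvelGroup R))

end Rack

/-- a finite injective quandle is a subquandle (for conjugation) of a
finite group: there are a finite group `G` and an injective quandle morphism
`Q → Conj G`. -/
theorem finite_injective_quandle_embeds_in_finite_group (Q : Type) [Quandle Q] [Fintype Q]
    (hinj : Function.Injective (Rack.toEnvelGroup Q)) :
    ∃ (G : Type) (_ : Group G) (_ : Fintype G) (f : Q → G),
      Function.Injective f ∧ ∀ x y : Q, f (x ◃ y) = f x * f y * (f x)⁻¹ := by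
  obtain ⟨N, hN⟩ := Group.ResiduallyFinite.exists_finiteIndexNormalSubgroup_injOn
    (G := Rack.EnvelGroup Q) (Set.finite_range (Rack.toEnvelGroup Q))
  refine ⟨_ ⧸ N.toSubgroup, inferInstance, Fintype.ofFinite _,
    fun x => (Rack.toEnvelGroup Q x : _ ⧸ N.toSubgroup), ?_, fun x y => ?_⟩
  · exact fun x y hxy => hinj (hN (Set.mem_range_self x) (Set.mem_range_self y) hxy)
  · simp only [Rack.toEnvelGroup_act, QuotientGroup.mk_mul, QuotientGroup.mk_inv]
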